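/- Let ω > 0, n ∈ ℕ, and let S be a random variable uniformly distributed on [0,1]. For every t with −π/ω − 2πn/ω ≤ t ≤ 2πn/ω + π/ω, one has 𝔼_S[Γ^cos_n(t; S, ω)] = cos(ωt). -/

import Mathlib

open Real
open scoped BigOperators

/-- `ReLU(t) = max(0, t)`. -/
noncomputable def relu (t : ℝ) : ℝ := max 0 t

/-- `R₄(t; S, ω) = ReLU(t) + ReLU(t - π/ω) - ReLU(t - πS/ω) - ReLU(t - π(1-S)/ω)`. -/
noncomputable def R4 (ω S t : ℝ) : ℝ :=
  relu t + relu (t - π / ω) - relu (t - π * S / ω) - relu (t - π * (1 - S) / ω)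

/-- `Γ^sin(t; S, ω) = (πω/2) sin(πS) [R₄(t; S, ω) - R₄(t - π/ω; S, ω)]`. -/
noncomputable def gammaSin (ω S t : ℝ) : ℝ :=
  π * ω / 2 * Real.sin (π * S) * (R4 ω S t - R4 ω S (t - π / ω))

/-- `Γ^cos_n(t; S, ω) = Σ_{i=-n-1}^{n} Γ^sin(t - 2πi/ω + π/(2ω); S, ω)`. -/
noncomputable def gammaCos (n : ℕ) (ω S t : ℝ) : ℝ :=
  ∑ i ∈ Finset.Icc (-(n : ℤ) - 1) (n : ℤ),
    gammaSin ω S (t - 2 * π * (i : ℝ) / ω + π / (2 * ω))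

/-!
Averaging against the weight `sin (π S)` smooths out the kink of `relu (t - π S / ω)`:
`∫₀¹ sin (π S) relu (t - π S / ω) dS = (relu t + relu (t - π / ω)) / π - sinArch ω t / (π ω)`,
and the substitution `S ↦ 1 - S` gives the same value for the kink at `π (1 - S) / ω`.
In `R₄` the piecewise linear parts cancel, so `𝔼[(π ω / 2) sin (π S) R₄(t)]` is the single arch
of `sin (ω t)` on `[0, π / ω]` and `𝔼[Γ^sin(t)]` is one full period of `sin (ω t)` on
`[0, 2π / ω)`. The shifted copies in `Γ^cos_n` tile a window containing `t + π / (2ω)`, and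
`sin (ω t + π / 2) = cos (ω t)`.
-/

open Set

theorem sum_indicator_Ico_sub_int_mul {g : ℝ → ℝ} {p : ℝ} (hg : Function.Periodic g p)
    (hp : 0 < p) {a b : ℤ} {x : ℝ} (hax : a * p ≤ x) (hxb : x < (b + 1) * p) :
    ∑ i ∈ Finset.Icc a b, (Ico 0 p).indicator g (x - i * p) = g x := by
  have mem_iff : ∀ i : ℤ, x - i * p ∈ Ico 0 p ↔ ⌊x / p⌋ = i := by
    intro i
    rw [Int.floor_eq_iff, mem_Ico, le_div_iff₀ hp, div_lt_iff₀ hp]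
    constructor <;> rintro ⟨h₁, h₂⟩ <;> constructor <;> linarith
  have hfloor : ⌊x / p⌋ ∈ Finset.Icc a b := by
    rw [Finset.mem_Icc, Int.le_floor, ← Int.lt_add_one_iff, Int.floor_lt, le_div_iff₀ hp,
      div_lt_iff₀ hp]
    exact ⟨hax, by exact_mod_cast hxb⟩
  rw [Finset.sum_eq_single_of_mem _ hfloor fun i _ hi =>
      indicator_of_notMem (fun h => hi ((mem_iff i).1 h).symm) _,
    indicator_of_mem ((mem_iff _).2 rfl), hg.sub_int_mul_eq]

@[fun_prop]
theorem continuous_relu : Continuous relu := continuous_const.max continuous_id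

theorem relu_of_nonneg {x : ℝ} (h : 0 ≤ x) : relu x = x := max_eq_right h

theorem relu_of_nonpos {x : ℝ} (h : x ≤ 0) : relu x = 0 := max_eq_left h

theorem integral_sin_pi_mul : ∫ S in (0 : ℝ)..1, sin (π * S) = 2 / π := by
  rw [intervalIntegral.integral_comp_mul_left sin pi_ne_zero, integral_sin]
  simp
  ring

theorem integral_sin_pi_mul_mul_affine (a c d : ℝ) :
    ∫ S in (0 : ℝ)..a, sin (π * S) * (c + d * S)
      = c / π - (c + d * a) * cos (π * a) / π + d * sin (π * a) / π ^ 2 := by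
  have hderiv : ∀ S ∈ uIcc (0 : ℝ) a,
      HasDerivAt (fun S => -(c + d * S) * cos (π * S) / π + d * sin (π * S) / π ^ 2)
        (sin (π * S) * (c + d * S)) S := by
    intro S _
    have hlin : HasDerivAt (fun S => π * S) π S := by simpa using (hasDerivAt_id S).const_mul π
    have h := ((((hasDerivAt_id S).const_mul d).const_add c).neg.mul
      ((hasDerivAt_cos _).comp S hlin)).div_const π |>.add
      ((((hasDerivAt_sin _).comp S hlin).const_mul d).div_const (π ^ 2))
    refine h.congr_deriv ?_
    simp only [Function.comp_apply, Pi.neg_apply, id]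
    field_simp
    ring
  rw [intervalIntegral.integral_eq_sub_of_hasDerivAt hderiv
    (Continuous.intervalIntegrable (by fun_prop) _ _)]
  simp
  ring

theorem integral_sin_pi_mul_mul_relu_of_split {ω t a : ℝ} (ha : a ∈ Icc (0 : ℝ) 1)
    (hpos : ∀ S ∈ Ioc 0 a, 0 ≤ t - π * S / ω)
    (hneg : ∀ S ∈ Ioc a 1, t - π * S / ω ≤ 0) :
    ∫ S in (0 : ℝ)..1, sin (π * S) * relu (t - π * S / ω)
      = t / π - (t - π / ω * a) * cos (π * a) / π - π / ω * sin (π * a) / π ^ 2 := by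
  have hcont : Continuous fun S => sin (π * S) * relu (t - π * S / ω) := by fun_prop
  rw [← intervalIntegral.integral_add_adjacent_intervals (hcont.intervalIntegrable 0 a)
    (hcont.intervalIntegrable a 1)]
  have hleft : ∫ S in (0 : ℝ)..a, sin (π * S) * relu (t - π * S / ω)
      = ∫ S in (0 : ℝ)..a, sin (π * S) * (t + -(π / ω) * S) := by
    refine intervalIntegral.integral_congr_ae (Filter.Eventually.of_forall fun S hS => ?_)
    rw [uIoc_of_le ha.1] at hS
    simp only [relu_of_nonneg (hpos S hS)]
    ring
  have hright : ∫ S in a..(1 : ℝ), sin (π * S) * relu (t - π * S / ω) = 0 := by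
    rw [← intervalIntegral.integral_zero]
    refine intervalIntegral.integral_congr_ae (Filter.Eventually.of_forall fun S hS => ?_)
    rw [uIoc_of_le ha.2] at hS
    simp only [relu_of_nonpos (hneg S hS), mul_zero]
  rw [hleft, hright, integral_sin_pi_mul_mul_affine]
  ring

noncomputable def sinArch (ω t : ℝ) : ℝ :=
  (Icc 0 (π / ω)).indicator (fun u => sin (ω * u)) t

theorem sinArch_of_mem {ω t : ℝ} (ht : t ∈ Icc 0 (π / ω)) : sinArch ω t = sin (ω * t) :=
  indicator_of_mem ht _

theorem sinArch_of_notMem_Ioo {ω t : ℝ} (hω : 0 < ω) (ht : t ∉ Ioo 0 (π / ω)) :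
    sinArch ω t = 0 := by
  by_cases hmem : t ∈ Icc 0 (π / ω)
  · rw [sinArch_of_mem hmem]
    obtain rfl | rfl : t = 0 ∨ t = π / ω := by
      by_contra! h
      exact ht ⟨hmem.1.lt_of_ne h.1.symm, hmem.2.lt_of_ne h.2⟩
    · simp
    · rw [mul_div_cancel₀ _ hω.ne', sin_pi]
  · exact indicator_of_notMem hmem _

theorem integral_sin_pi_mul_mul_relu {ω : ℝ} (hω : 0 < ω) (t : ℝ) :
    ∫ S in (0 : ℝ)..1, sin (π * S) * relu (t - π * S / ω)
      = (relu t + relu (t - π / ω)) / π - sinArch ω t / (π * ω) := by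
  have hπω : 0 < π / ω := div_pos pi_pos hω
  rcases le_or_gt t 0 with ht₀ | ht₀
  · have hsplit := integral_sin_pi_mul_mul_relu_of_split (t := t) (ω := ω) (a := 0)
      ⟨le_rfl, zero_le_one⟩ (fun S hS => absurd hS.2 hS.1.not_ge) fun S hS => by
        have : 0 ≤ π * S / ω := by have := hS.1.le; positivity
        linarith
    rw [hsplit, relu_of_nonpos ht₀, relu_of_nonpos (by linarith),
      sinArch_of_notMem_Ioo hω fun h => (not_lt.2 ht₀) h.1]
    simp
  rcases le_or_gt t (π / ω) with htπ | htπ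
  · -- the kink of `S ↦ relu (t - π S / ω)` sits at `S = ω t / π ∈ [0, 1]`
    have hsplit := integral_sin_pi_mul_mul_relu_of_split (t := t) (a := ω * t / π)
      ⟨by positivity, by rw [div_le_one pi_pos]; rwa [le_div_iff₀ hω, mul_comm] at htπ⟩
      (fun S hS => by
        have := (le_div_iff₀ pi_pos).1 hS.2
        rw [sub_nonneg, div_le_iff₀ hω]; linarith)
      fun S hS => by
        have := (div_lt_iff₀ pi_pos).1 hS.1
        rw [sub_nonpos, le_div_iff₀ hω]; linarith
    have hkink : π * (ω * t / π) = ω * t := by field_simp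
    rw [hsplit, hkink, sinArch_of_mem ⟨ht₀.le, htπ⟩, relu_of_nonneg ht₀.le,
      relu_of_nonpos (by linarith)]
    field_simp
    ring
  · have hsplit := integral_sin_pi_mul_mul_relu_of_split (t := t) (ω := ω) (a := 1)
      ⟨zero_le_one, le_rfl⟩
      (fun S hS => by
        have : π * S / ω ≤ π / ω := by gcongr; exact mul_le_of_le_one_right pi_pos.le hS.2
        linarith)
      fun S hS => absurd hS.2 hS.1.not_ge
    rw [hsplit, sinArch_of_notMem_Ioo hω fun h => htπ.not_ge h.2.le, relu_of_nonneg ht₀.le,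
      relu_of_nonneg (by linarith)]
    simp only [mul_one, cos_pi, sin_pi]
    ring

theorem integral_sin_pi_mul_mul_relu_reflect {ω : ℝ} (hω : 0 < ω) (t : ℝ) :
    ∫ S in (0 : ℝ)..1, sin (π * S) * relu (t - π * (1 - S) / ω)
      = (relu t + relu (t - π / ω)) / π - sinArch ω t / (π * ω) := by
  have h := intervalIntegral.integral_comp_sub_left
    (fun S => sin (π * S) * relu (t - π * S / ω)) (a := 0) (b := 1) 1
  simp only [sub_self, sub_zero, mul_one_sub, sin_pi_sub] at h ⊢
  rw [h, integral_sin_pi_mul_mul_relu hω t]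

theorem integral_sin_pi_mul_mul_R4 {ω : ℝ} (hω : 0 < ω) (t : ℝ) :
    ∫ S in (0 : ℝ)..1, π * ω / 2 * sin (π * S) * R4 ω S t = sinArch ω t := by
  have hR4 : ∀ S, π * ω / 2 * sin (π * S) * R4 ω S t
      = π * ω / 2 * ((relu t + relu (t - π / ω)) * sin (π * S)
        - sin (π * S) * relu (t - π * S / ω) - sin (π * S) * relu (t - π * (1 - S) / ω)) :=
    fun S => by unfold R4; ring
  simp_rw [hR4]
  rw [intervalIntegral.integral_const_mul, intervalIntegral.integral_sub,
    intervalIntegral.integral_sub, intervalIntegral.integral_const_mul,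
    integral_sin_pi_mul, integral_sin_pi_mul_mul_relu hω,
    integral_sin_pi_mul_mul_relu_reflect hω]
  · field_simp
    ring
  all_goals exact Continuous.intervalIntegrable (by fun_prop) _ _

theorem sinArch_sub_sinArch_sub {ω : ℝ} (hω : 0 < ω) (u : ℝ) :
    sinArch ω u - sinArch ω (u - π / ω)
      = (Ico 0 (2 * π / ω)).indicator (fun u => sin (ω * u)) u := by
  have hπω : 0 < π / ω := div_pos pi_pos hω
  have htwo : 2 * π / ω = π / ω + π / ω := by ring
  by_cases hu : u ∈ Ico 0 (2 * π / ω)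
  · rw [indicator_of_mem hu]
    rcases le_or_gt u (π / ω) with h | h
    · rw [sinArch_of_mem ⟨hu.1, h⟩, sinArch_of_notMem_Ioo hω fun h' => by linarith [h'.1],
        sub_zero]
    · rw [sinArch_of_notMem_Ioo hω fun h' => by linarith [h'.2],
        sinArch_of_mem ⟨by linarith, by linarith [hu.2]⟩, mul_sub, mul_div_cancel₀ _ hω.ne',
        sin_sub_pi]
      ring
  · rw [indicator_of_notMem hu]
    rw [mem_Ico, not_and_or, not_le, not_lt] at hu
    rcases hu with h | h
    · rw [sinArch_of_notMem_Ioo hω fun h' => by linarith [h'.1],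
        sinArch_of_notMem_Ioo hω fun h' => by linarith [h'.1], sub_zero]
    · rw [sinArch_of_notMem_Ioo hω fun h' => by linarith [h'.2],
        sinArch_of_notMem_Ioo hω fun h' => by linarith [h'.2], sub_zero]

theorem integral_gammaSin {ω : ℝ} (hω : 0 < ω) (u : ℝ) :
    ∫ S in (0 : ℝ)..1, gammaSin ω S u
      = (Ico 0 (2 * π / ω)).indicator (fun u => sin (ω * u)) u := by
  unfold gammaSin
  simp_rw [mul_sub]
  rw [intervalIntegral.integral_sub (Continuous.intervalIntegrable (by unfold R4; fun_prop) _ _)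
      (Continuous.intervalIntegrable (by unfold R4; fun_prop) _ _),
    integral_sin_pi_mul_mul_R4 hω, integral_sin_pi_mul_mul_R4 hω, sinArch_sub_sinArch_sub hω]

/-- **Unbiasedness of the random ReLU estimator for cosine.** For
`-π/ω - 2πn/ω ≤ t ≤ 2πn/ω + π/ω` and `S ~ Unif[0,1]`,
`𝔼_S[Γ^cos_n(t; S, ω)] = cos(ωt)`. -/
theorem gammaCos_expectation (ω : ℝ) (hω : 0 < ω) (n : ℕ) (t : ℝ)
    (ht₁ : -(π / ω) - 2 * π * (n : ℝ) / ω ≤ t) (ht₂ : t ≤ 2 * π * (n : ℝ) / ω + π / ω) :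
    ∫ S in (0 : ℝ)..1, gammaCos n ω S t = Real.cos (ω * t) := by
  have hπω : 0 < π / ω := div_pos pi_pos hω
  have hshift : ∀ i : ℤ,
      t - 2 * π * (i : ℝ) / ω + π / (2 * ω) = t + π / (2 * ω) - i * (2 * π / ω) :=
    fun i => by ring
  have hperiodic : Function.Periodic (fun u => sin (ω * u)) (2 * π / ω) := fun u => by
    simp only [mul_add, mul_div_cancel₀ _ hω.ne', sin_add_two_pi]
  unfold gammaCos
  rw [intervalIntegral.integral_finsetSum fun i _ =>
    Continuous.intervalIntegrable (by unfold gammaSin R4; fun_prop) _ _]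
  simp_rw [integral_gammaSin hω, hshift]
  rw [sum_indicator_Ico_sub_int_mul hperiodic (by positivity) ?lower ?upper, mul_add,
    show ω * (π / (2 * ω)) = π / 2 by field_simp, sin_add_pi_div_two]
  case lower =>
    push_cast
    linarith [show (-(n : ℝ) - 1) * (2 * π / ω) = -(2 * π * n / ω) - 2 * (π / ω) by ring,
      show π / (2 * ω) = π / ω / 2 by ring]
  case upper =>
    push_cast
    linarith [show ((n : ℝ) + 1) * (2 * π / ω) = 2 * π * n / ω + 2 * (π / ω) by ring,
      show π / (2 * ω) = π / ω / 2 by ring]
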